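/- Suppose the circle family C_{(γ,λ)} is creative. Then the discriminant set D equals the union of E₂ (the union of images of all envelopes) and the circles C_{(γ(t),λ(t))} over all singular points t of γ: D = E₂ ∪ ⋃_{t ∈ Σ(γ)} C_{(γ(t),λ(t))}, where Σ(γ) = {t ∈ I : γ'(t) = 0}. -/

import Mathlib

noncomputable section

/-- The Euclidean plane. -/
abbrev Plane := EuclideanSpace ℝ (Fin 2)

/-- The standard scalar (dot) product on the plane. -/
def dotp (x y : Plane) : ℝ := inner ℝ x y

/-- The vector with coordinates `a`, `b`. -/
def vec2 (a b : ℝ) : Plane := (WithLp.equiv 2 (Fin 2 → ℝ)).symm ![a, b]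

/-- Anti-clockwise rotation by π/2. -/
def rotJ (v : Plane) : Plane := vec2 (-(v 1)) (v 0)

/-- `f` is an envelope of the circle family with center curve `γ` and radius
function `r`, on the parameter set `I`. -/
def IsEnvelope (I : Set ℝ) (γ : ℝ → Plane) (r : ℝ → ℝ) (f : ℝ → Plane) : Prop :=
  ContDiffOn ℝ (⊤ : ℕ∞) f I ∧
    ∀ t ∈ I, ‖f t - γ t‖ = r t ∧ dotp (deriv f t) (f t - γ t) = 0

lemma vec2_0 (a b : ℝ) : vec2 a b 0 = a := rfl
lemma vec2_1 (a b : ℝ) : vec2 a b 1 = b := rfl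
lemma rotJ_0 (v : Plane) : rotJ v 0 = -(v 1) := rfl
lemma rotJ_1 (v : Plane) : rotJ v 1 = v 0 := rfl

lemma dotp_eq (x y : Plane) : dotp x y = x 0 * y 0 + x 1 * y 1 := by
  simp [dotp, PiLp.inner_apply, Fin.sum_univ_two, mul_comm]

lemma dotp_comm (x y : Plane) : dotp x y = dotp y x := by simp [dotp_eq]; ring

lemma dotp_smul_left (c : ℝ) (x y : Plane) : dotp (c • x) y = c * dotp x y :=
  real_inner_smul_left x y c

lemma dotp_smul_right (c : ℝ) (x y : Plane) : dotp x (c • y) = c * dotp x y :=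
  real_inner_smul_right x y c

lemma norm_sq_eq_dotp (x : Plane) : ‖x‖^2 = dotp x x :=
  (real_inner_self_eq_norm_sq x).symm

lemma plane_ext {x y : Plane} (h0 : x 0 = y 0) (h1 : x 1 = y 1) : x = y := by
  ext i; fin_cases i <;> assumption

def rotJL : Plane →ₗ[ℝ] Plane where
  toFun := rotJ
  map_add' x y := by
    refine plane_ext ?_ ?_ <;> simp [rotJ_0, rotJ_1, PiLp.add_apply] <;> ring
  map_smul' c x := by
    refine plane_ext ?_ ?_ <;> simp [rotJ_0, rotJ_1, PiLp.smul_apply, smul_eq_mul] <;> ring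

def rotJC : Plane →L[ℝ] Plane := rotJL.toContinuousLinearMap

lemma rotJC_eq (v : Plane) : rotJC v = rotJ v := rfl

/-- decomposition in the orthonormal basis (ν, rotJ ν) -/
lemma decomp (n v : Plane) (hn : dotp n n = 1) :
    v = dotp v n • n + dotp v (rotJ n) • rotJ n := by
  rw [dotp_eq] at hn
  refine plane_ext ?_ ?_
  · simp [PiLp.add_apply, PiLp.smul_apply, smul_eq_mul, dotp_eq, rotJ_0, rotJ_1]
    linear_combination -v 0 * hn
  · simp [PiLp.add_apply, PiLp.smul_apply, smul_eq_mul, dotp_eq, rotJ_0, rotJ_1]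
    linear_combination -v 1 * hn

lemma key_ab (n u : Plane) (hn : dotp n n = 1) (hu : dotp u u = 1) :
    dotp u n ^ 2 + dotp u (rotJ n) ^ 2 = 1 := by
  simp only [dotp_eq, rotJ_0, rotJ_1] at *
  nlinarith [hn, hu]

lemma two_sol (n u w : Plane) (hn : dotp n n = 1) (hu : dotp u u = 1) (hw : dotp w w = 1)
    (h : dotp u (rotJ n) = dotp w (rotJ n)) :
    u = w ∨ u = (2 * dotp w (rotJ n)) • rotJ n - w := by
  have ha := key_ab n u hn hu
  have hc := key_ab n w hn hw
  have h1 := decomp n u hn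
  have h2 := decomp n w hn
  rw [h] at ha h1
  have hsq : (dotp u n - dotp w n) * (dotp u n + dotp w n) = 0 := by nlinarith [ha, hc]
  set b := dotp w (rotJ n) with hb
  set a := dotp u n with hA
  set c := dotp w n with hC
  rcases mul_eq_zero.mp hsq with h0 | h0
  · left
    have hac : a = c := by linarith
    rw [h1, h2, hac]
  · right
    have hac : a = -c := by linarith
    rw [h1, h2, hac]
    module

lemma refl_unit (n w : Plane) (hn : dotp n n = 1) (hw : dotp w w = 1) :
    dotp ((2 * dotp w (rotJ n)) • rotJ n - w) ((2 * dotp w (rotJ n)) • rotJ n - w) = 1 := by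
  simp only [dotp_eq, rotJ_0, rotJ_1, PiLp.sub_apply, PiLp.smul_apply, smul_eq_mul] at *
  linear_combination (4*(w 0 * -n 1 + w 1 * n 0)^2) * hn + hw

lemma refl_dot (n w : Plane) (hn : dotp n n = 1) :
    dotp ((2 * dotp w (rotJ n)) • rotJ n - w) (rotJ n) = dotp w (rotJ n) := by
  simp only [dotp_eq, rotJ_0, rotJ_1, PiLp.sub_apply, PiLp.smul_apply, smul_eq_mul] at *
  linear_combination (2*(w 0 * -n 1 + w 1 * n 0)) * hn

lemma diffAt {E : Type*} [NormedAddCommGroup E] [NormedSpace ℝ E] {g : ℝ → E} {I : Set ℝ}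
    (hI : IsOpen I) (hg : ContDiffOn ℝ (⊤ : ℕ∞) g I) {t : ℝ} (ht : t ∈ I) :
    DifferentiableAt ℝ g t :=
  (hg.contDiffAt (hI.mem_nhds ht)).differentiableAt (by simp)

lemma unit_deriv {e : ℝ → Plane} {I : Set ℝ} (hI : IsOpen I)
    (he : ContDiffOn ℝ (⊤ : ℕ∞) e I) (hu : ∀ t ∈ I, ‖e t‖ = 1) {t : ℝ} (ht : t ∈ I) :
    dotp (deriv e t) (e t) = 0 := by
  have hd := (diffAt hI he ht).hasDerivAt
  have h1 : HasDerivAt (fun s => (inner ℝ (e s) (e s) : ℝ))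
      (inner ℝ (e t) (deriv e t) + inner ℝ (deriv e t) (e t)) t := hd.inner ℝ hd
  have h2 : deriv (fun s => (inner ℝ (e s) (e s) : ℝ)) t = 0 := by
    have hev : (fun s => (inner ℝ (e s) (e s) : ℝ)) =ᶠ[nhds t] fun _ => (1 : ℝ) := by
      filter_upwards [hI.mem_nhds ht] with s hs
      rw [real_inner_self_eq_norm_sq, hu s hs]; norm_num
    rw [hev.deriv_eq, deriv_const]
  have h3 := h1.deriv
  rw [h2] at h3
  have : dotp (e t) (deriv e t) = dotp (deriv e t) (e t) := dotp_comm _ _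
  simp only [dotp] at this
  simp only [dotp]
  linarith [h3]

lemma derivF {γ : ℝ → Plane} {r : ℝ → ℝ} {I : Set ℝ} (hI : IsOpen I)
    (hγ : ContDiffOn ℝ (⊤ : ℕ∞) γ I) (hr : ContDiffOn ℝ (⊤ : ℕ∞) r I) {t : ℝ} (ht : t ∈ I) (p : Plane) :
    deriv (fun s => ‖p - γ s‖ ^ 2 - r s ^ 2) t
      = -2 * dotp (p - γ t) (deriv γ t) - 2 * r t * deriv r t := by
  have hγd := (diffAt hI hγ ht).hasDerivAt
  have hrd := (diffAt hI hr ht).hasDerivAt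
  have hsub : HasDerivAt (fun s => p - γ s) (-deriv γ t) t := by
    have h := (hasDerivAt_const t p).sub hγd; rw [zero_sub] at h; exact h
  have h1 : HasDerivAt (fun s => (inner ℝ (p - γ s) (p - γ s) : ℝ))
      (inner ℝ (p - γ t) (-deriv γ t) + inner ℝ (-deriv γ t) (p - γ t)) t := hsub.inner ℝ hsub
  have h2 : HasDerivAt (fun s => r s * r s) (deriv r t * r t + r t * deriv r t) t :=
    hrd.mul hrd
  have h3 : HasDerivAt (fun s => (inner ℝ (p - γ s) (p - γ s) : ℝ) - r s * r s) _ t := (h1.sub h2)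
  have hfun : (fun s => ‖p - γ s‖ ^ 2 - r s ^ 2)
      = fun s => (inner ℝ (p - γ s) (p - γ s) : ℝ) - r s * r s := by
    funext s; rw [real_inner_self_eq_norm_sq]; ring
  rw [hfun, h3.deriv]
  have hcomm : (inner ℝ (p - γ t) (deriv γ t) : ℝ) = inner ℝ (deriv γ t) (p - γ t) :=
    real_inner_comm _ _
  simp only [dotp, inner_neg_left, inner_neg_right]
  linarith [hcomm]

lemma envelope_of_unit {I : Set ℝ} {γ e : ℝ → Plane} {r : ℝ → ℝ} (hI : IsOpen I)
    (hγ : ContDiffOn ℝ (⊤ : ℕ∞) γ I) (hr : ContDiffOn ℝ (⊤ : ℕ∞) r I) (hrpos : ∀ t ∈ I, 0 ≤ r t)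
    (he : ContDiffOn ℝ (⊤ : ℕ∞) e I) (heu : ∀ t ∈ I, ‖e t‖ = 1)
    (hcompat : ∀ t ∈ I, dotp (deriv γ t) (e t) + deriv r t = 0) :
    IsEnvelope I γ r (fun t => γ t + r t • e t) := by
  constructor
  · exact hγ.add (hr.smul he)
  · intro t ht
    have hγd := (diffAt hI hγ ht).hasDerivAt
    have hrd := (diffAt hI hr ht).hasDerivAt
    have hed := (diffAt hI he ht).hasDerivAt
    have hfd : HasDerivAt (fun s => γ s + r s • e s)
        (deriv γ t + (r t • deriv e t + deriv r t • e t)) t := hγd.add (hrd.smul hed)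
    have hsub : (γ t + r t • e t) - γ t = r t • e t := by abel
    constructor
    · rw [hsub, norm_smul, heu t ht, Real.norm_eq_abs, abs_of_nonneg (hrpos t ht), mul_one]
    · rw [hfd.deriv, hsub]
      have h0 : dotp (deriv e t) (e t) = 0 := unit_deriv hI he heu ht
      have h1 : dotp (e t) (e t) = 1 := by
        rw [← norm_sq_eq_dotp, heu t ht]; norm_num
      have h2 := hcompat t ht
      simp only [dotp, inner_add_left, real_inner_smul_left, real_inner_smul_right] at *
      linear_combination r t * h2 + (r t * r t) * h0 + (r t * deriv r t) * h1

lemma deriv_env {I : Set ℝ} {γ f : ℝ → Plane} {r : ℝ → ℝ} (hI : IsOpen I)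
    (hγ : ContDiffOn ℝ (⊤ : ℕ∞) γ I) (hr : ContDiffOn ℝ (⊤ : ℕ∞) r I) (hf : ContDiffOn ℝ (⊤ : ℕ∞) f I)
    (hfr : ∀ s ∈ I, ‖f s - γ s‖ = r s) {t : ℝ} (ht : t ∈ I) :
    dotp (f t - γ t) (deriv f t) - dotp (f t - γ t) (deriv γ t) = r t * deriv r t := by
  have hγd := (diffAt hI hγ ht).hasDerivAt
  have hrd := (diffAt hI hr ht).hasDerivAt
  have hfd := (diffAt hI hf ht).hasDerivAt
  have hsub : HasDerivAt (fun s => f s - γ s) (deriv f t - deriv γ t) t := hfd.sub hγd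
  have h1 : HasDerivAt (fun s => (inner ℝ (f s - γ s) (f s - γ s) : ℝ))
      (inner ℝ (f t - γ t) (deriv f t - deriv γ t) + inner ℝ (deriv f t - deriv γ t) (f t - γ t))
      t := hsub.inner ℝ hsub
  have h2 : HasDerivAt (fun s => (inner ℝ (f s - γ s) (f s - γ s) : ℝ) - r s * r s)
      (inner ℝ (f t - γ t) (deriv f t - deriv γ t) + inner ℝ (deriv f t - deriv γ t) (f t - γ t)
        - (deriv r t * r t + r t * deriv r t)) t := h1.sub (hrd.mul hrd)
  have hzero : deriv (fun s => (inner ℝ (f s - γ s) (f s - γ s) : ℝ) - r s * r s) t = 0 := by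
    have hev : (fun s => (inner ℝ (f s - γ s) (f s - γ s) : ℝ) - r s * r s)
        =ᶠ[nhds t] fun _ => (0 : ℝ) := by
      filter_upwards [hI.mem_nhds ht] with s hs
      rw [real_inner_self_eq_norm_sq, hfr s hs]; ring
    rw [hev.deriv_eq, deriv_const]
  have h3 := h2.deriv
  rw [hzero] at h3
  have hcomm : (inner ℝ (deriv f t - deriv γ t) (f t - γ t) : ℝ)
      = inner ℝ (f t - γ t) (deriv f t - deriv γ t) := real_inner_comm _ _
  simp only [dotp, inner_sub_right] at *
  linarith [h3, hcomm]

lemma norm_eq_one_of_dotp {x : Plane} (h : dotp x x = 1) : ‖x‖ = 1 := by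
  have h1 : ‖x‖ ^ 2 = 1 := by rw [norm_sq_eq_dotp]; exact h
  have h2 := norm_nonneg x
  nlinarith [h1, h2]

theorem discriminant_eq (I : Set ℝ) (hIopen : IsOpen I) (hIconn : I.OrdConnected)
    (γ ν : ℝ → Plane) (r : ℝ → ℝ)
    (hγ : ContDiffOn ℝ (⊤ : ℕ∞) γ I) (hν : ContDiffOn ℝ (⊤ : ℕ∞) ν I)
    (hνunit : ∀ t ∈ I, ‖ν t‖ = 1)
    (hfrontal : ∀ t ∈ I, dotp (deriv γ t) (ν t) = 0)
    (hr : ContDiffOn ℝ (⊤ : ℕ∞) r I) (hrpos : ∀ t ∈ I, 0 < r t)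
    (ντ : ℝ → Plane) (hcrs : ContDiffOn ℝ (⊤ : ℕ∞) ντ I) (hcru : ∀ t ∈ I, ‖ντ t‖ = 1)
    (hcr : ∀ t ∈ I,
      deriv r t = -(dotp (deriv γ t) (rotJ (ν t))) * dotp (ντ t) (rotJ (ν t))) :
    {p : Plane | ∃ t ∈ I, ‖p - γ t‖ ^ 2 - (r t) ^ 2 = 0 ∧
        deriv (fun s => ‖p - γ s‖ ^ 2 - (r s) ^ 2) t = 0} =
      {p : Plane | ∃ f : ℝ → Plane, IsEnvelope I γ r f ∧ ∃ t ∈ I, f t = p} ∪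
      ⋃ t ∈ {t ∈ I | deriv γ t = 0}, {p : Plane | ‖p - γ t‖ = r t} := by
  -- basic facts
  have hνn : ∀ t ∈ I, dotp (ν t) (ν t) = 1 := fun t ht => by
    rw [← norm_sq_eq_dotp, hνunit t ht]; norm_num
  have hντn : ∀ t ∈ I, dotp (ντ t) (ντ t) = 1 := fun t ht => by
    rw [← norm_sq_eq_dotp, hcru t ht]; norm_num
  have hγ' : ∀ t ∈ I, deriv γ t = dotp (deriv γ t) (rotJ (ν t)) • rotJ (ν t) := by
    intro t ht
    have h := decomp (ν t) (deriv γ t) (hνn t ht)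
    rwa [hfrontal t ht, zero_smul, zero_add] at h
  -- smoothness of μ = rotJ ∘ ν and of the reflected field
  have hμs : ContDiffOn ℝ (⊤ : ℕ∞) (fun t => rotJ (ν t)) I :=
    (ContinuousLinearMap.contDiff rotJC).comp_contDiffOn hν
  have hbs : ContDiffOn ℝ (⊤ : ℕ∞) (fun t => dotp (ντ t) (rotJ (ν t))) I := by
    simp only [dotp]
    exact hcrs.inner ℝ hμs
  set e₂ : ℝ → Plane := fun t => (2 * dotp (ντ t) (rotJ (ν t))) • rotJ (ν t) - ντ t with he₂def
  have he₂s : ContDiffOn ℝ (⊤ : ℕ∞) e₂ I := ((contDiffOn_const.mul hbs).smul hμs).sub hcrs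
  have he₂u : ∀ t ∈ I, ‖e₂ t‖ = 1 := fun t ht =>
    norm_eq_one_of_dotp (refl_unit (ν t) (ντ t) (hνn t ht) (hντn t ht))
  -- compatibility for the two canonical envelopes
  have hcompat₁ : ∀ t ∈ I, dotp (deriv γ t) (ντ t) + deriv r t = 0 := by
    intro t ht
    have h1 : dotp (deriv γ t) (ντ t)
        = dotp (deriv γ t) (rotJ (ν t)) * dotp (rotJ (ν t)) (ντ t) := by
      conv_lhs => rw [hγ' t ht]
      simp only [dotp, real_inner_smul_left]
    rw [h1, hcr t ht, dotp_comm (rotJ (ν t)) (ντ t)]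
    ring
  have hcompat₂ : ∀ t ∈ I, dotp (deriv γ t) (e₂ t) + deriv r t = 0 := by
    intro t ht
    have h1 : dotp (deriv γ t) (e₂ t)
        = dotp (deriv γ t) (rotJ (ν t)) * dotp (rotJ (ν t)) (e₂ t) := by
      conv_lhs => rw [hγ' t ht]
      simp only [dotp, real_inner_smul_left]
    have h2 : dotp (rotJ (ν t)) (e₂ t) = dotp (ντ t) (rotJ (ν t)) := by
      rw [dotp_comm]
      exact refl_dot (ν t) (ντ t) (hνn t ht)
    rw [h1, h2, hcr t ht]
    ring
  have henv₁ : IsEnvelope I γ r (fun t => γ t + r t • ντ t) :=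
    envelope_of_unit hIopen hγ hr (fun t ht => (hrpos t ht).le) hcrs hcru hcompat₁
  have henv₂ : IsEnvelope I γ r (fun t => γ t + r t • e₂ t) :=
    envelope_of_unit hIopen hγ hr (fun t ht => (hrpos t ht).le) he₂s he₂u hcompat₂
  ext p
  simp only [Set.mem_setOf_eq, Set.mem_union, Set.mem_iUnion, exists_prop]
  constructor
  · rintro ⟨t, ht, hF, hFt⟩
    rw [derivF hIopen hγ hr ht p] at hFt
    have hnorm : ‖p - γ t‖ = r t := by
      have h1 : ‖p - γ t‖ ^ 2 = (r t) ^ 2 := by linarith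
      have h2 := norm_nonneg (p - γ t)
      have h3 := hrpos t ht
      nlinarith [h1, h2, h3]
    by_cases hγ0 : deriv γ t = 0
    · right
      exact ⟨t, ⟨ht, hγ0⟩, hnorm⟩
    · left
      have hrne : r t ≠ 0 := (hrpos t ht).ne'
      have hβ : dotp (deriv γ t) (rotJ (ν t)) ≠ 0 := by
        intro h0
        apply hγ0
        rw [hγ' t ht, h0, zero_smul]
      set u : Plane := (r t)⁻¹ • (p - γ t) with hudef
      have hru : r t • u = p - γ t := by
        rw [hudef, smul_smul, mul_inv_cancel₀ hrne, one_smul]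
      have huu : dotp u u = 1 := by
        rw [hudef, dotp_smul_left, dotp_smul_right, ← norm_sq_eq_dotp, hnorm]
        field_simp
      have hpγ : dotp (p - γ t) (deriv γ t) = -(r t * deriv r t) := by linarith
      have hbu : dotp u (rotJ (ν t)) = dotp (ντ t) (rotJ (ν t)) := by
        have h1 : dotp (p - γ t) (deriv γ t)
            = dotp (deriv γ t) (rotJ (ν t)) * dotp (p - γ t) (rotJ (ν t)) := by
          conv_lhs => rw [hγ' t ht]
          rw [dotp_smul_right]
        have h2 : dotp (deriv γ t) (rotJ (ν t)) * dotp (p - γ t) (rotJ (ν t))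
            = dotp (deriv γ t) (rotJ (ν t)) * (r t * dotp (ντ t) (rotJ (ν t))) := by
          rw [← h1, hpγ, hcr t ht]; ring
        have h3 : dotp (p - γ t) (rotJ (ν t)) = r t * dotp (ντ t) (rotJ (ν t)) :=
          mul_left_cancel₀ hβ h2
        rw [hudef, dotp_smul_left, h3, ← mul_assoc, inv_mul_cancel₀ hrne, one_mul]
      rcases two_sol (ν t) u (ντ t) (hνn t ht) huu (hντn t ht) hbu with hcase | hcase
      · refine ⟨fun s => γ s + r s • ντ s, henv₁, t, ht, ?_⟩
        show γ t + r t • ντ t = p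
        rw [← hcase, hru]
        abel
      · refine ⟨fun s => γ s + r s • e₂ s, henv₂, t, ht, ?_⟩
        show γ t + r t • e₂ t = p
        have heq : e₂ t = (2 * dotp (ντ t) (rotJ (ν t))) • rotJ (ν t) - ντ t := rfl
        rw [heq, ← hcase, hru]
        abel
  · rintro (⟨f, ⟨hfs, hfprop⟩, t, ht, rfl⟩ | ⟨t, ⟨ht, hγ0⟩, hnorm⟩)
    · refine ⟨t, ht, ?_, ?_⟩
      · rw [(hfprop t ht).1]; ring
      · rw [derivF hIopen hγ hr ht]
        have h1 := deriv_env hIopen hγ hr hfs (fun s hs => (hfprop s hs).1) ht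
        have h2 := (hfprop t ht).2
        rw [dotp_comm] at h2
        linarith [h1, h2]
    · refine ⟨t, ht, ?_, ?_⟩
      · rw [hnorm]; ring
      · rw [derivF hIopen hγ hr ht]
        have h1 : dotp (p - γ t) (deriv γ t) = 0 := by
          rw [hγ0]; simp [dotp]
        have h2 : deriv r t = 0 := by
          rw [hcr t ht, hγ0]
          simp [dotp_eq, rotJ_0, rotJ_1]
        rw [h1, h2]; ring
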